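/- Let M = [0,∞) ×_f S^{k-1} ×_h S¹ with f(r)/r → 0 and h(r) → 0 as r → ∞ (e.g., f(r) = √(ln 2)·r/ln^{1/2}(2+r²), h(r) = 1/ln(2+r²)), with base point p at r = 0. Then for every sequence r_i → ∞, the rescaled pointed spaces (r_i^{-1} M, p) converge in the pointed Gromov–Hausdorff sense to the half-line ([0,∞), 0). -/

import Mathlib

open Real

/-- Coordinates (r, x, y) for points of the doubly warped product
M = [0,∞) ×_f S^{k-1} ×_h S¹: r ∈ ℝ, x ∈ ℝ^k, y ∈ ℝ (angle on the unit circle). -/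
abbrev DWPoint (k : ℕ) : Type := ℝ × EuclideanSpace ℝ (Fin k) × ℝ

/-- Admissible coordinates: r ≥ 0 and x on the unit sphere S^{k-1}. -/
def IsDWPoint {k : ℕ} (p : DWPoint k) : Prop := 0 ≤ p.1 ∧ ‖p.2.1‖ = 1

/-- A C¹ coordinate path in the doubly warped product. -/
structure DWPath (k : ℕ) where
  r : ℝ → ℝ
  x : ℝ → EuclideanSpace ℝ (Fin k)
  y : ℝ → ℝ
  contDiff_r : ContDiff ℝ 1 r
  contDiff_x : ContDiff ℝ 1 x
  contDiff_y : ContDiff ℝ 1 y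
  r_nonneg : ∀ t, 0 ≤ r t
  x_sphere : ∀ t, ‖x t‖ = 1

/-- Riemannian length of a coordinate path for the metric
g = dr² + f(r)² ds²_{k-1} + h(r)² ds²₁. -/
noncomputable def DWPath.length {k : ℕ} (f h : ℝ → ℝ) (γ : DWPath k) : ℝ :=
  ∫ t in (0:ℝ)..1,
    Real.sqrt ((deriv γ.r t) ^ 2 + (f (γ.r t)) ^ 2 * ‖deriv γ.x t‖ ^ 2
      + (h (γ.r t)) ^ 2 * (deriv γ.y t) ^ 2)

/-- The path joins p to q.  The angular coordinate y is taken mod 2π, and at r = 0 the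
spherical coordinate x is immaterial (all points (0, x, y) are identified). -/
def DWPath.Joins {k : ℕ} (γ : DWPath k) (p q : DWPoint k) : Prop :=
  γ.r 0 = p.1 ∧ γ.r 1 = q.1 ∧
  (p.1 = 0 ∨ γ.x 0 = p.2.1) ∧ (q.1 = 0 ∨ γ.x 1 = q.2.1) ∧
  (∃ m : ℤ, γ.y 0 = p.2.2 + 2 * π * m) ∧ (∃ m : ℤ, γ.y 1 = q.2.2 + 2 * π * m)

/-- The Riemannian distance of the doubly warped product, as the infimum of lengths of
admissible coordinate paths. -/
noncomputable def dwpDist (f h : ℝ → ℝ) (k : ℕ) (p q : DWPoint k) : ℝ :=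
  sInf {L | ∃ γ : DWPath k, γ.Joins p q ∧ L = DWPath.length f h γ}

/-- The three diagonal Ricci curvatures (in the directions H = ∂/∂r, U tangent to the
sphere, V tangent to the circle) of the doubly warped product metric
dr² + f(r)² ds²_{k-1} + h(r)² ds²₁ are positive; since the Ricci tensor is diagonal in
this frame, this says exactly that M has positive Ricci curvature. -/
def DWRicciPos (k : ℕ) (f h : ℝ → ℝ) : Prop :=
  ∀ r > (0:ℝ),
    0 < -(iteratedDeriv 2 h r) / h r - (k - 1 : ℝ) * (iteratedDeriv 2 f r) / f r ∧
    0 < -(iteratedDeriv 2 f r) / f r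
        + ((k - 2 : ℝ) / (f r) ^ 2) * (1 - (deriv f r) ^ 2)
        - (deriv f r * deriv h r) / (f r * h r) ∧
    0 < -(iteratedDeriv 2 h r) / h r
        - (k - 1 : ℝ) * (deriv f r * deriv h r) / (f r * h r)

section DWAux
open Real MeasureTheory intervalIntegral
open Real MeasureTheory intervalIntegral

section Part1
variable {k : ℕ}

lemma dw_integrand_continuous (f h : ℝ → ℝ) (hf : Continuous f) (hh : Continuous h)
    (γ : DWPath k) :
    Continuous (fun t => Real.sqrt ((deriv γ.r t) ^ 2 + (f (γ.r t)) ^ 2 * ‖deriv γ.x t‖ ^ 2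
      + (h (γ.r t)) ^ 2 * (deriv γ.y t) ^ 2)) := by
  have hr' : Continuous (deriv γ.r) := γ.contDiff_r.continuous_deriv le_rfl
  have hx' : Continuous (deriv γ.x) := γ.contDiff_x.continuous_deriv le_rfl
  have hy' : Continuous (deriv γ.y) := γ.contDiff_y.continuous_deriv le_rfl
  have hr : Continuous γ.r := γ.contDiff_r.continuous
  exact ((((hr'.pow 2).add (((hf.comp hr).pow 2).mul (hx'.norm.pow 2))).add
    (((hh.comp hr).pow 2).mul (hy'.pow 2)))).sqrt

lemma dw_length_nonneg (f h : ℝ → ℝ) (γ : DWPath k) : 0 ≤ γ.length f h := by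
  apply intervalIntegral.integral_nonneg zero_le_one
  intro t _; exact Real.sqrt_nonneg _

lemma dw_abs_le_length (f h : ℝ → ℝ) (hf : Continuous f) (hh : Continuous h)
    (γ : DWPath k) : |γ.r 1 - γ.r 0| ≤ γ.length f h := by
  have hdiff : ∀ x ∈ Set.uIcc (0:ℝ) 1, DifferentiableAt ℝ γ.r x :=
    fun x _ => (γ.contDiff_r.differentiable one_ne_zero).differentiableAt
  have hr' : Continuous (deriv γ.r) := γ.contDiff_r.continuous_deriv le_rfl
  have hint : IntervalIntegrable (deriv γ.r) volume 0 1 := hr'.intervalIntegrable 0 1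
  rw [← intervalIntegral.integral_deriv_eq_sub hdiff hint]
  calc |∫ t in (0:ℝ)..1, deriv γ.r t| ≤ ∫ t in (0:ℝ)..1, |deriv γ.r t| :=
        intervalIntegral.abs_integral_le_integral_abs zero_le_one
    _ ≤ γ.length f h := by
        apply intervalIntegral.integral_mono_on zero_le_one
          (hr'.abs.intervalIntegrable 0 1)
          ((dw_integrand_continuous f h hf hh γ).intervalIntegrable 0 1)
        intro t _
        rw [← Real.sqrt_sq_eq_abs]
        apply Real.sqrt_le_sqrt
        nlinarith [sq_nonneg (f (γ.r t) * ‖deriv γ.x t‖), sq_nonneg (h (γ.r t) * deriv γ.y t)]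

lemma dwpDist_le (f h : ℝ → ℝ) (p q : DWPoint k) (γ : DWPath k) (hγ : γ.Joins p q) :
    dwpDist f h k p q ≤ γ.length f h :=
  csInf_le ⟨0, fun _ ⟨γ', _, hL⟩ => hL ▸ dw_length_nonneg f h γ'⟩ ⟨γ, hγ, rfl⟩

lemma dw_abs_le_dwpDist (f h : ℝ → ℝ) (hf : Continuous f) (hh : Continuous h)
    (p q : DWPoint k)
    (hne : ∃ γ : DWPath k, γ.Joins p q) : |p.1 - q.1| ≤ dwpDist f h k p q := by
  obtain ⟨γ₀, hγ₀⟩ := hne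
  apply le_csInf
  · exact ⟨γ₀.length f h, γ₀, hγ₀, rfl⟩
  rintro L ⟨γ, hJ, rfl⟩
  calc |p.1 - q.1| = |γ.r 1 - γ.r 0| := by rw [hJ.1, hJ.2.1, abs_sub_comm]
    _ ≤ γ.length f h := dw_abs_le_length f h hf hh γ

end Part1

open Real

section Part2
variable {k : ℕ}

lemma dw_exists_unit_orthogonal (hk : 2 ≤ k) (x : EuclideanSpace ℝ (Fin k)) (hx : ‖x‖ = 1) :
    ∃ w : EuclideanSpace ℝ (Fin k), ‖w‖ = 1 ∧ inner ℝ x w = (0:ℝ) := by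
  have hx0 : x ≠ 0 := by intro h0; rw [h0, norm_zero] at hx; norm_num at hx
  set K := Submodule.span ℝ ({x} : Set (EuclideanSpace ℝ (Fin k))) with hK
  have h1 : Module.finrank ℝ K = 1 := finrank_span_singleton hx0
  have h2 : Module.finrank ℝ Kᗮ ≠ 0 := by
    have h3 := Submodule.finrank_add_finrank_orthogonal K
    rw [finrank_euclideanSpace_fin, h1] at h3
    omega
  have h3 : Kᗮ ≠ ⊥ := by
    intro hbot
    apply h2
    rw [Submodule.finrank_eq_zero]
    exact hbot
  obtain ⟨v, hvmem, hv0⟩ := (Submodule.ne_bot_iff _).mp h3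
  have hvn : ‖v‖ ≠ 0 := norm_ne_zero_iff.mpr hv0
  refine ⟨‖v‖⁻¹ • v, ?_, ?_⟩
  · rw [norm_smul, norm_inv, norm_norm, inv_mul_cancel₀ hvn]
  · have hxv : inner ℝ x v = (0:ℝ) :=
      (Submodule.mem_orthogonal K v).mp hvmem x (Submodule.mem_span_singleton_self x)
    rw [real_inner_smul_right, hxv, mul_zero]

lemma dw_norm_combo (x w : EuclideanSpace ℝ (Fin k)) (hx : ‖x‖ = 1) (hw : ‖w‖ = 1)
    (hxw : inner ℝ x w = (0:ℝ)) (a b : ℝ) :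
    ‖a • x + b • w‖ = Real.sqrt (a ^ 2 + b ^ 2) := by
  have h1 : ‖a • x + b • w‖ ^ 2 = a ^ 2 + b ^ 2 := by
    rw [norm_add_sq_real, norm_smul, norm_smul, real_inner_smul_left, real_inner_smul_right,
      hxw, hx, hw]
    simp [mul_pow, sq_abs]
  rw [← h1, Real.sqrt_sq (norm_nonneg _)]

lemma dw_exists_rotation (hk : 2 ≤ k) (x x' : EuclideanSpace ℝ (Fin k))
    (hx : ‖x‖ = 1) (hx' : ‖x'‖ = 1) :
    ∃ (w : EuclideanSpace ℝ (Fin k)) (θ : ℝ), 0 ≤ θ ∧ θ ≤ π ∧ ‖w‖ = 1 ∧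
      inner ℝ x w = (0:ℝ) ∧ x' = Real.cos θ • x + Real.sin θ • w := by
  set c : ℝ := inner ℝ x x' with hc
  have hcabs : |c| ≤ 1 := by
    have := abs_real_inner_le_norm x x'
    rwa [hx, hx', mul_one] at this
  have hc1 : -1 ≤ c := neg_le_of_abs_le hcabs
  have hc2 : c ≤ 1 := le_of_abs_le hcabs
  set θ := Real.arccos c with hθ
  have hcos : Real.cos θ = c := Real.cos_arccos hc1 hc2
  have hsin : Real.sin θ = Real.sqrt (1 - c ^ 2) := Real.sin_arccos c
  set u : EuclideanSpace ℝ (Fin k) := x' - c • x with hu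
  have hun : ‖u‖ ^ 2 = 1 - c ^ 2 := by
    have h9 : inner ℝ x' x = c := by rw [real_inner_comm]
    rw [hu, norm_sub_sq_real, norm_smul, real_inner_smul_right, hx, hx', h9]
    simp [mul_pow, sq_abs]
    ring
  by_cases hcase : 1 - c ^ 2 = 0
  · -- u = 0, x' = c • x
    have hu0 : u = 0 := by
      have : ‖u‖ ^ 2 = 0 := by rw [hun, hcase]
      have := pow_eq_zero_iff (n := 2) (by norm_num) |>.mp this
      exact norm_eq_zero.mp this
    have hx'eq : x' = c • x := by
      have := sub_eq_zero.mp hu0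
      exact this
    obtain ⟨w, hw1, hw2⟩ := dw_exists_unit_orthogonal hk x hx
    refine ⟨w, θ, Real.arccos_nonneg c, Real.arccos_le_pi c, hw1, hw2, ?_⟩
    rw [hsin, Real.sqrt_eq_zero' .. |>.mpr (le_of_eq hcase), hcos, zero_smul, add_zero,
      hx'eq]
  · have hpos : 0 < 1 - c ^ 2 := lt_of_le_of_ne (by nlinarith [sq_abs c, abs_nonneg c]) (Ne.symm hcase)
    have hsq : Real.sqrt (1 - c ^ 2) > 0 := Real.sqrt_pos.mpr hpos
    have hunorm : ‖u‖ = Real.sqrt (1 - c ^ 2) := by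
      rw [← hun, Real.sqrt_sq (norm_nonneg _)]
    set w : EuclideanSpace ℝ (Fin k) := (Real.sqrt (1 - c ^ 2))⁻¹ • u with hwdef
    refine ⟨w, θ, Real.arccos_nonneg c, Real.arccos_le_pi c, ?_, ?_, ?_⟩
    · rw [hwdef, norm_smul, norm_inv, Real.norm_eq_abs, abs_of_pos hsq, hunorm,
        inv_mul_cancel₀ (ne_of_gt hsq)]
    · rw [hwdef, real_inner_smul_right, hu, inner_sub_right, real_inner_smul_right,
        real_inner_self_eq_norm_sq, hx]
      simp [← hc]
    · rw [hcos, hsin, hwdef, smul_smul, mul_inv_cancel₀ (ne_of_gt hsq), one_smul, hu]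
      abel

end Part2

open Real MeasureTheory intervalIntegral

noncomputable def dwσ (t : ℝ) : ℝ := (1 - Real.cos (π * t)) / 2

lemma dwσ_hasDerivAt (t : ℝ) : HasDerivAt dwσ (π * Real.sin (π * t) / 2) t := by
  have h1 : HasDerivAt (fun t : ℝ => π * t) π t := by
    simpa using (hasDerivAt_id t).const_mul π
  have h2 : HasDerivAt (fun t : ℝ => Real.cos (π * t)) (-Real.sin (π * t) * π) t :=
    (Real.hasDerivAt_cos (π * t)).comp t h1
  have h3 := ((hasDerivAt_const t (1:ℝ)).sub h2).div_const 2
  convert h3 using 1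
  · rfl
  · rfl
  · rfl
  · ring

lemma dwσ_deriv (t : ℝ) : deriv dwσ t = π * Real.sin (π * t) / 2 := (dwσ_hasDerivAt t).deriv

lemma dwσ_contDiff : ContDiff ℝ 1 dwσ := by
  have h1 : ContDiff ℝ 1 (fun t : ℝ => Real.cos (π * t)) :=
    (Real.contDiff_cos.of_le le_top).comp (contDiff_const.mul contDiff_id)
  exact (contDiff_const.sub h1).div_const 2

lemma dwσ_zero : dwσ 0 = 0 := by simp [dwσ]

lemma dwσ_one : dwσ 1 = 1 := by simp [dwσ]

lemma dwσ_nonneg (t : ℝ) : 0 ≤ dwσ t := by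
  have := Real.cos_le_one (π * t); unfold dwσ; linarith

lemma dwσ_le_one (t : ℝ) : dwσ t ≤ 1 := by
  have := Real.neg_one_le_cos (π * t); unfold dwσ; linarith

lemma dwσ_deriv_nonneg {t : ℝ} (ht : t ∈ Set.Icc (0:ℝ) 1) : 0 ≤ deriv dwσ t := by
  rw [dwσ_deriv]
  have h1 : 0 ≤ Real.sin (π * t) := by
    apply Real.sin_nonneg_of_nonneg_of_le_pi
    · exact mul_nonneg Real.pi_pos.le ht.1
    · calc π * t ≤ π * 1 := by nlinarith [Real.pi_pos, ht.2]
        _ = π := mul_one π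
  positivity

lemma dwσ_deriv_continuous : Continuous (deriv dwσ) := by
  have : deriv dwσ = fun t => π * Real.sin (π * t) / 2 := funext dwσ_deriv
  rw [this]
  fun_prop

variable {k : ℕ}

noncomputable def stdPath (s₀ s₁ : ℝ) (xv wv : EuclideanSpace ℝ (Fin k)) (θ y₀ y₁ : ℝ)
    (hs₀ : 0 ≤ s₀) (hs₁ : 0 ≤ s₁) (hx : ‖xv‖ = 1) (hw : ‖wv‖ = 1)
    (hxw : inner ℝ xv wv = (0:ℝ)) : DWPath k where
  r t := s₀ + dwσ t * (s₁ - s₀)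
  x t := Real.cos (θ * dwσ t) • xv + Real.sin (θ * dwσ t) • wv
  y t := y₀ + dwσ t * (y₁ - y₀)
  contDiff_r := contDiff_const.add (dwσ_contDiff.mul contDiff_const)
  contDiff_x := by
    apply ContDiff.add
    · exact ((Real.contDiff_cos.of_le le_top).comp (contDiff_const.mul dwσ_contDiff)).smul
        contDiff_const
    · exact ((Real.contDiff_sin.of_le le_top).comp (contDiff_const.mul dwσ_contDiff)).smul
        contDiff_const
  contDiff_y := contDiff_const.add (dwσ_contDiff.mul contDiff_const)
  r_nonneg := fun t => by
    have h1 := dwσ_nonneg t; have h2 := dwσ_le_one t; nlinarith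
  x_sphere := fun t => by
    rw [dw_norm_combo xv wv hx hw hxw, Real.cos_sq_add_sin_sq, Real.sqrt_one]

lemma stdPath_r (s₀ s₁ : ℝ) (xv wv : EuclideanSpace ℝ (Fin k)) (θ y₀ y₁ : ℝ)
    (hs₀ hs₁ hx hw hxw) (t : ℝ) :
    (stdPath s₀ s₁ xv wv θ y₀ y₁ hs₀ hs₁ hx hw hxw).r t = s₀ + dwσ t * (s₁ - s₀) := rfl

lemma stdPath_deriv_r (s₀ s₁ : ℝ) (xv wv : EuclideanSpace ℝ (Fin k)) (θ y₀ y₁ : ℝ)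
    (hs₀ hs₁ hx hw hxw) (t : ℝ) :
    deriv (stdPath s₀ s₁ xv wv θ y₀ y₁ hs₀ hs₁ hx hw hxw).r t = deriv dwσ t * (s₁ - s₀) := by
  have : HasDerivAt (fun t => s₀ + dwσ t * (s₁ - s₀)) (π * Real.sin (π * t) / 2 * (s₁ - s₀)) t := by
    have h0 := (hasDerivAt_const t s₀).add ((dwσ_hasDerivAt t).mul_const (s₁ - s₀))
    rwa [zero_add] at h0
  rw [show (stdPath s₀ s₁ xv wv θ y₀ y₁ hs₀ hs₁ hx hw hxw).r = fun t => s₀ + dwσ t * (s₁ - s₀) from rfl,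
    this.deriv, dwσ_deriv]

lemma stdPath_deriv_y (s₀ s₁ : ℝ) (xv wv : EuclideanSpace ℝ (Fin k)) (θ y₀ y₁ : ℝ)
    (hs₀ hs₁ hx hw hxw) (t : ℝ) :
    deriv (stdPath s₀ s₁ xv wv θ y₀ y₁ hs₀ hs₁ hx hw hxw).y t = deriv dwσ t * (y₁ - y₀) := by
  have : HasDerivAt (fun t => y₀ + dwσ t * (y₁ - y₀)) (π * Real.sin (π * t) / 2 * (y₁ - y₀)) t := by
    have h0 := (hasDerivAt_const t y₀).add ((dwσ_hasDerivAt t).mul_const (y₁ - y₀))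
    rwa [zero_add] at h0
  rw [show (stdPath s₀ s₁ xv wv θ y₀ y₁ hs₀ hs₁ hx hw hxw).y = fun t => y₀ + dwσ t * (y₁ - y₀) from rfl,
    this.deriv, dwσ_deriv]

lemma stdPath_norm_deriv_x (s₀ s₁ : ℝ) (xv wv : EuclideanSpace ℝ (Fin k)) (θ y₀ y₁ : ℝ)
    (hs₀ hs₁ hx hw hxw) (t : ℝ) :
    ‖deriv (stdPath s₀ s₁ xv wv θ y₀ y₁ hs₀ hs₁ hx hw hxw).x t‖ = |θ * deriv dwσ t| := by
  have hu : HasDerivAt (fun t => θ * dwσ t) (θ * (π * Real.sin (π * t) / 2)) t :=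
    (dwσ_hasDerivAt t).const_mul θ
  have hc : HasDerivAt (fun t => Real.cos (θ * dwσ t))
      (-Real.sin (θ * dwσ t) * (θ * (π * Real.sin (π * t) / 2))) t :=
    hu.cos
  have hs : HasDerivAt (fun t => Real.sin (θ * dwσ t))
      (Real.cos (θ * dwσ t) * (θ * (π * Real.sin (π * t) / 2))) t :=
    hu.sin
  have hd : HasDerivAt (stdPath s₀ s₁ xv wv θ y₀ y₁ hs₀ hs₁ hx hw hxw).x
      ((-Real.sin (θ * dwσ t) * (θ * (π * Real.sin (π * t) / 2))) • xv
        + (Real.cos (θ * dwσ t) * (θ * (π * Real.sin (π * t) / 2))) • wv) t :=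
    (hc.smul_const xv).add (hs.smul_const wv)
  rw [hd.deriv, dw_norm_combo xv wv hx hw hxw, dwσ_deriv]
  rw [show (-Real.sin (θ * dwσ t) * (θ * (π * Real.sin (π * t) / 2))) ^ 2
      + (Real.cos (θ * dwσ t) * (θ * (π * Real.sin (π * t) / 2))) ^ 2
      = (Real.sin (θ * dwσ t) ^ 2 + Real.cos (θ * dwσ t) ^ 2)
        * (θ * (π * Real.sin (π * t) / 2)) ^ 2 from by ring,
    Real.sin_sq_add_cos_sq, one_mul, Real.sqrt_sq_eq_abs]

lemma stdPath_length (f h : ℝ → ℝ) (s₀ s₁ : ℝ) (xv wv : EuclideanSpace ℝ (Fin k))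
    (θ y₀ y₁ : ℝ) (hs₀ hs₁ hx hw hxw) :
    (stdPath s₀ s₁ xv wv θ y₀ y₁ hs₀ hs₁ hx hw hxw).length f h
      = ∫ t in (0:ℝ)..1, deriv dwσ t *
          Real.sqrt ((s₁ - s₀) ^ 2 + (f (s₀ + dwσ t * (s₁ - s₀))) ^ 2 * θ ^ 2
            + (h (s₀ + dwσ t * (s₁ - s₀))) ^ 2 * (y₁ - y₀) ^ 2) := by
  unfold DWPath.length
  apply intervalIntegral.integral_congr
  intro t ht
  rw [Set.uIcc_of_le zero_le_one] at ht
  have hσ' := dwσ_deriv_nonneg ht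
  dsimp only
  rw [stdPath_deriv_r, stdPath_deriv_y, stdPath_norm_deriv_x, stdPath_r]
  rw [show (deriv dwσ t * (s₁ - s₀)) ^ 2
      + (f (s₀ + dwσ t * (s₁ - s₀))) ^ 2 * |θ * deriv dwσ t| ^ 2
      + (h (s₀ + dwσ t * (s₁ - s₀))) ^ 2 * (deriv dwσ t * (y₁ - y₀)) ^ 2
      = (deriv dwσ t) ^ 2 * ((s₁ - s₀) ^ 2 + (f (s₀ + dwσ t * (s₁ - s₀))) ^ 2 * θ ^ 2
        + (h (s₀ + dwσ t * (s₁ - s₀))) ^ 2 * (y₁ - y₀) ^ 2) from by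
    rw [sq_abs]; ring]
  rw [Real.sqrt_mul (sq_nonneg _), Real.sqrt_sq_eq_abs, abs_of_nonneg hσ']

lemma dwσ_integral_deriv : ∫ t in (0:ℝ)..1, deriv dwσ t = 1 := by
  rw [intervalIntegral.integral_deriv_eq_sub
    (fun t _ => (dwσ_hasDerivAt t).differentiableAt)
    (dwσ_deriv_continuous.intervalIntegrable 0 1), dwσ_one, dwσ_zero]
  norm_num

lemma stdPath_length_tangential (f h : ℝ → ℝ) (s : ℝ) (xv wv : EuclideanSpace ℝ (Fin k))
    (θ y₀ y₁ : ℝ) (hs₀ hs₁ hx hw hxw) :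
    (stdPath s s xv wv θ y₀ y₁ hs₀ hs₁ hx hw hxw).length f h
      = Real.sqrt ((f s) ^ 2 * θ ^ 2 + (h s) ^ 2 * (y₁ - y₀) ^ 2) := by
  rw [stdPath_length]
  have : ∀ t : ℝ, s + dwσ t * (s - s) = s := by intro t; ring
  simp only [sub_self, mul_zero, add_zero, this]
  rw [show ((0:ℝ) ^ 2 + (f s) ^ 2 * θ ^ 2 + (h s) ^ 2 * (y₁ - y₀) ^ 2)
      = ((f s) ^ 2 * θ ^ 2 + (h s) ^ 2 * (y₁ - y₀) ^ 2) from by ring]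
  rw [intervalIntegral.integral_mul_const, dwσ_integral_deriv, one_mul]

lemma stdPath_length_radial (f h : ℝ → ℝ) (s₀ s₁ : ℝ) (xv wv : EuclideanSpace ℝ (Fin k))
    (y₀ : ℝ) (hs₀ hs₁ hx hw hxw) :
    (stdPath s₀ s₁ xv wv 0 y₀ y₀ hs₀ hs₁ hx hw hxw).length f h = |s₁ - s₀| := by
  rw [stdPath_length]
  have : ∀ t : ℝ, ((s₁ - s₀) ^ 2 + (f (s₀ + dwσ t * (s₁ - s₀))) ^ 2 * (0:ℝ) ^ 2
      + (h (s₀ + dwσ t * (s₁ - s₀))) ^ 2 * (y₀ - y₀) ^ 2) = (s₁ - s₀) ^ 2 := by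
    intro t; ring
  simp only [this, Real.sqrt_sq_eq_abs]
  rw [intervalIntegral.integral_mul_const, dwσ_integral_deriv, one_mul]

open Real

variable {k : ℕ}

lemma stdPath_joins (s₀ s₁ : ℝ) (xv wv x₁ : EuclideanSpace ℝ (Fin k)) (θ y₀ y₁ y₁' : ℝ)
    (hs₀ hs₁ hx hw hxw)
    (hx1 : s₁ = 0 ∨ x₁ = Real.cos θ • xv + Real.sin θ • wv)
    (m : ℤ) (hy1 : y₁ = y₁' + 2 * π * m) :
    (stdPath s₀ s₁ xv wv θ y₀ y₁ hs₀ hs₁ hx hw hxw).Joins (s₀, xv, y₀) (s₁, x₁, y₁') := by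
  refine ⟨?_, ?_, Or.inr ?_, ?_, ⟨0, ?_⟩, ⟨m, ?_⟩⟩
  · show s₀ + dwσ 0 * (s₁ - s₀) = s₀
    rw [dwσ_zero]; ring
  · show s₀ + dwσ 1 * (s₁ - s₀) = s₁
    rw [dwσ_one]; ring
  · show Real.cos (θ * dwσ 0) • xv + Real.sin (θ * dwσ 0) • wv = xv
    rw [dwσ_zero, mul_zero, Real.cos_zero, Real.sin_zero, one_smul, zero_smul, add_zero]
  · rcases hx1 with h0 | heq
    · exact Or.inl h0
    · right
      show Real.cos (θ * dwσ 1) • xv + Real.sin (θ * dwσ 1) • wv = x₁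
      rw [dwσ_one, mul_one, heq]
  · show y₀ + dwσ 0 * (y₁ - y₀) = y₀ + 2 * π * ((0:ℤ):ℝ)
    rw [dwσ_zero]; push_cast; ring
  · show y₀ + dwσ 1 * (y₁ - y₀) = y₁' + 2 * π * (m:ℝ)
    rw [dwσ_one, hy1]; ring

lemma dw_joins_nonempty (hk : 2 ≤ k) (p q : DWPoint k) (hp : IsDWPoint p) (hq : IsDWPoint q) :
    ∃ γ : DWPath k, γ.Joins p q := by
  obtain ⟨a, x, y⟩ := p
  obtain ⟨b, x', y'⟩ := q
  obtain ⟨ha, hx⟩ := hp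
  obtain ⟨hb, hx'⟩ := hq
  obtain ⟨w, θ, _, _, hw, hxw, hrot⟩ := dw_exists_rotation hk x x' hx hx'
  exact ⟨stdPath a b x w θ y y' ha hb hx hw hxw,
    stdPath_joins a b x w x' θ y y' y' ha hb hx hw hxw (Or.inr hrot) 0 (by push_cast; ring)⟩

lemma dwpDist_radial_le (f h : ℝ → ℝ) (hk : 2 ≤ k) (s₀ s₁ : ℝ) (hs₀ : 0 ≤ s₀) (hs₁ : 0 ≤ s₁)
    (x x' : EuclideanSpace ℝ (Fin k)) (hx : ‖x‖ = 1) (hx' : ‖x'‖ = 1) (y : ℝ)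
    (hx1 : s₁ = 0 ∨ x' = x) :
    dwpDist f h k (s₀, x, y) (s₁, x', y) ≤ |s₁ - s₀| := by
  obtain ⟨w, hw, hxw⟩ := dw_exists_unit_orthogonal hk x hx
  have hrot : s₁ = 0 ∨ x' = Real.cos 0 • x + Real.sin 0 • w := by
    rcases hx1 with h0 | heq
    · exact Or.inl h0
    · right; rw [heq, Real.cos_zero, Real.sin_zero, one_smul, zero_smul, add_zero]
  have hj := stdPath_joins s₀ s₁ x w x' 0 y y y hs₀ hs₁ hx hw hxw hrot 0 (by push_cast; ring)
  calc dwpDist f h k (s₀, x, y) (s₁, x', y)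
      ≤ (stdPath s₀ s₁ x w 0 y y hs₀ hs₁ hx hw hxw).length f h := dwpDist_le f h _ _ _ hj
    _ = |s₁ - s₀| := stdPath_length_radial f h s₀ s₁ x w y hs₀ hs₁ hx hw hxw

lemma dwpDist_tangential_le (f h : ℝ → ℝ) (hk : 2 ≤ k) (s : ℝ) (hs : 0 ≤ s)
    (hfs : 0 ≤ f s) (hhs : 0 ≤ h s)
    (x x' : EuclideanSpace ℝ (Fin k)) (hx : ‖x‖ = 1) (hx' : ‖x'‖ = 1) (y y' : ℝ) :
    dwpDist f h k (s, x, y) (s, x', y') ≤ π * f s + π * h s := by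
  obtain ⟨w, θ, hθ0, hθπ, hw, hxw, hrot⟩ := dw_exists_rotation hk x x' hx hx'
  set m : ℤ := round ((y' - y) / (2 * π)) with hm
  set y₁ : ℝ := y' - 2 * π * m with hy₁def
  have hπ : (0:ℝ) < π := Real.pi_pos
  have h2π : (0:ℝ) < 2 * π := by positivity
  have hy₁ : |y₁ - y| ≤ π := by
    have h1 := abs_sub_round ((y' - y) / (2 * π))
    have h2 : y₁ - y = ((y' - y) / (2 * π) - m) * (2 * π) := by
      field_simp [hy₁def]
      ring
    rw [h2, abs_mul, abs_of_pos h2π]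
    calc |(y' - y) / (2 * π) - ↑m| * (2 * π) ≤ 1 / 2 * (2 * π) := by
          apply mul_le_mul_of_nonneg_right h1 h2π.le
      _ = π := by ring
  have hj := stdPath_joins s s x w x' θ y y₁ y' hs hs hx hw hxw (Or.inr hrot) (-m)
    (by push_cast; rw [hy₁def]; ring)
  calc dwpDist f h k (s, x, y) (s, x', y')
      ≤ (stdPath s s x w θ y y₁ hs hs hx hw hxw).length f h := dwpDist_le f h _ _ _ hj
    _ = Real.sqrt ((f s) ^ 2 * θ ^ 2 + (h s) ^ 2 * (y₁ - y) ^ 2) :=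
        stdPath_length_tangential f h s x w θ y y₁ hs hs hx hw hxw
    _ ≤ π * f s + π * h s := by
        have hb : (f s) ^ 2 * θ ^ 2 + (h s) ^ 2 * (y₁ - y) ^ 2 ≤ (π * f s + π * h s) ^ 2 := by
          have h3 : (y₁ - y) ^ 2 ≤ π ^ 2 := by
            have := sq_abs (y₁ - y)
            nlinarith [abs_nonneg (y₁ - y)]
          have h4 : θ ^ 2 ≤ π ^ 2 := by nlinarith
          nlinarith [mul_le_mul_of_nonneg_left h4 (sq_nonneg (f s)),
            mul_le_mul_of_nonneg_left h3 (sq_nonneg (h s)),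
            mul_nonneg hfs hhs, sq_nonneg π]
        calc Real.sqrt ((f s) ^ 2 * θ ^ 2 + (h s) ^ 2 * (y₁ - y) ^ 2)
            ≤ Real.sqrt ((π * f s + π * h s) ^ 2) := Real.sqrt_le_sqrt hb
          _ = π * f s + π * h s := Real.sqrt_sq (by positivity)

end DWAux

open Filter

/- STATEMENT 14.
M = [0,∞) ×_f S^{k-1} ×_h S¹ (realized via the chart Ψ, base point p = Ψ(0,x₀,y₀) at
r = 0) with f(r)/r → 0 and h(r) → 0 as r → ∞.  For every sequence r_i → ∞ the rescaled
pointed spaces (r_i⁻¹ M, p) converge in the pointed Gromov–Hausdorff sense to the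
half-line ([0,∞), 0).  Pointed GH convergence is expressed by ε-approximations: for all
ε, R > 0, eventually in i there is a map F from M to ℝ sending p to 0 which, on the
rescaled ball of radius R about p, takes values ε-close to [0,∞), distorts rescaled
distances by at most ε, and has ε-dense image in [0,R]. -/
set_option maxHeartbeats 2000000 in
theorem rescaled_dwp_converges_to_half_line
    (k : ℕ) (hk : 2 ≤ k) (f h : ℝ → ℝ)
    (hf : ContDiff ℝ (⊤ : ℕ∞) f) (hh : ContDiff ℝ (⊤ : ℕ∞) h)
    (hf0 : f 0 = 0) (hf'0 : deriv f 0 = 1) (hh0 : 0 < h 0) (hh'0 : deriv h 0 = 0)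
    (hfpos : ∀ r > (0:ℝ), 0 < f r) (hhpos : ∀ r : ℝ, 0 < h r)
    (hflim : Tendsto (fun r => f r / r) atTop (nhds 0))
    (hhlim : Tendsto h atTop (nhds 0))
    {M : Type*} [MetricSpace M] (Ψ : DWPoint k → M)
    (hsurj : ∀ m : M, ∃ p, IsDWPoint p ∧ Ψ p = m)
    (hiso : ∀ p q : DWPoint k, IsDWPoint p → IsDWPoint q →
      dist (Ψ p) (Ψ q) = dwpDist f h k p q)
    (x₀ : EuclideanSpace ℝ (Fin k)) (hx₀ : ‖x₀‖ = 1) (y₀ : ℝ)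
    (p : M) (hpdef : p = Ψ (0, x₀, y₀))
    (ri : ℕ → ℝ) (hri_pos : ∀ i, 0 < ri i) (hri : Tendsto ri atTop atTop) :
    ∀ ε > (0:ℝ), ∀ R > (0:ℝ), ∀ᶠ i in atTop, ∃ F : M → ℝ,
      F p = 0 ∧
      (∀ a : M, dist p a ≤ ri i * R → -ε ≤ F a ∧ F a ≤ R + ε) ∧
      (∀ a b : M, dist p a ≤ ri i * R → dist p b ≤ ri i * R →
        abs (dist a b / ri i - |F a - F b|) ≤ ε) ∧
      (∀ s ∈ Set.Icc (0:ℝ) R, ∃ a : M, dist p a ≤ ri i * R ∧ |F a - s| ≤ ε) := by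
  intro ε hε R hR
  have hπ := Real.pi_pos
  have hfc : Continuous f := hf.continuous
  have hhc : Continuous h := hh.continuous
  have hfnn : ∀ s : ℝ, 0 ≤ s → 0 ≤ f s := by
    intro s hs
    rcases hs.eq_or_lt with h0 | h0
    · rw [← h0, hf0]
    · exact (hfpos s h0).le
  have hlow : ∀ u v : DWPoint k, IsDWPoint u → IsDWPoint v →
      |u.1 - v.1| ≤ dist (Ψ u) (Ψ v) := by
    intro u v hu hv
    rw [hiso u v hu hv]
    exact dw_abs_le_dwpDist f h hfc hhc u v (dw_joins_nonempty hk u v hu hv)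
  have hpadm : IsDWPoint ((0:ℝ), x₀, y₀) := ⟨le_rfl, hx₀⟩
  have D1 : ∀ (t : ℝ) (x : EuclideanSpace ℝ (Fin k)) (y : ℝ), 0 ≤ t → ‖x‖ = 1 →
      t ≤ dist p (Ψ (t, x, y)) ∧ dist p (Ψ (t, x, y)) ≤ t + π * h 0 := by
    intro t x y ht hx
    have hadm : IsDWPoint (t, x, y) := ⟨ht, hx⟩
    have hadm0 : IsDWPoint ((0:ℝ), x, y) := ⟨le_rfl, hx⟩
    constructor
    · have h9 := hlow ((0:ℝ), x₀, y₀) (t, x, y) hpadm hadm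
      rw [hpdef]
      simpa [abs_of_nonneg ht] using h9
    · calc dist p (Ψ (t, x, y))
          ≤ dist p (Ψ ((0:ℝ), x, y)) + dist (Ψ ((0:ℝ), x, y)) (Ψ (t, x, y)) :=
            dist_triangle _ _ _
        _ ≤ (π * f 0 + π * h 0) + |t - 0| := by
            apply add_le_add
            · rw [hpdef, hiso _ _ hpadm hadm0]
              exact dwpDist_tangential_le f h hk 0 le_rfl (hfnn 0 le_rfl) (hhpos 0).le
                x₀ x hx₀ hx y₀ y
            · rw [hiso _ _ hadm0 hadm]
              exact dwpDist_radial_le f h hk 0 t le_rfl ht x x hx hx y (Or.inr rfl)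
        _ = t + π * h 0 := by rw [hf0, sub_zero, abs_of_nonneg ht]; ring
  have claim : ∀ (s t : ℝ) (x x' : EuclideanSpace ℝ (Fin k)) (y y' : ℝ),
      0 ≤ s → s ≤ t → ‖x‖ = 1 → ‖x'‖ = 1 →
      dist (Ψ (s, x, y)) (Ψ (t, x', y')) ≤ (t - s) + (π * f s + π * h s) := by
    intro s t x x' y y' hs hst hx hx'
    have h1 : IsDWPoint (s, x, y) := ⟨hs, hx⟩
    have h2 : IsDWPoint (s, x', y') := ⟨hs, hx'⟩
    have h3 : IsDWPoint (t, x', y') := ⟨hs.trans hst, hx'⟩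
    calc dist (Ψ (s, x, y)) (Ψ (t, x', y'))
        ≤ dist (Ψ (s, x, y)) (Ψ (s, x', y')) + dist (Ψ (s, x', y')) (Ψ (t, x', y')) :=
          dist_triangle _ _ _
      _ ≤ (π * f s + π * h s) + |t - s| := by
          apply add_le_add
          · rw [hiso _ _ h1 h2]
            exact dwpDist_tangential_le f h hk s hs (hfnn s hs) (hhpos s).le x x' hx hx' y y'
          · rw [hiso _ _ h2 h3]
            exact dwpDist_radial_le f h hk s t hs (hs.trans hst) x' x' hx' hx' y' (Or.inr rfl)
      _ = (t - s) + (π * f s + π * h s) := by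
          rw [abs_of_nonneg (by linarith)]; ring
  -- constants
  have hR1 : (0:ℝ) < R + 1 := by linarith
  set δ := ε / (2 * π * (R + 1)) with hδdef
  have hδ : 0 < δ := div_pos hε (by positivity)
  obtain ⟨S₁, hS₁⟩ : ∃ S₁ : ℝ, ∀ r ≥ S₁, |f r / r| < δ := by
    have h1 := (Metric.tendsto_nhds.mp hflim) δ hδ
    rw [Filter.eventually_atTop] at h1
    obtain ⟨S₁, hS₁⟩ := h1
    exact ⟨S₁, fun r hr => by have h2 := hS₁ r hr; rwa [Real.dist_eq, sub_zero] at h2⟩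
  obtain ⟨S₂, hS₂⟩ : ∃ S₂ : ℝ, ∀ r ≥ S₂, |h r| < 1 := by
    have h1 := (Metric.tendsto_nhds.mp hhlim) 1 one_pos
    rw [Filter.eventually_atTop] at h1
    obtain ⟨S₂, hS₂⟩ := h1
    exact ⟨S₂, fun r hr => by have h2 := hS₂ r hr; rwa [Real.dist_eq, sub_zero] at h2⟩
  set S₀ := max (max S₁ S₂) 1 with hS₀def
  have hS₀1 : (1:ℝ) ≤ S₀ := le_max_right _ _
  have hS₀0 : (0:ℝ) ≤ S₀ := by linarith
  obtain ⟨zf, hzfmem, hzfmax⟩ :=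
    isCompact_Icc.exists_isMaxOn (Set.nonempty_Icc.mpr hS₀0) hfc.continuousOn
  obtain ⟨zh, hzhmem, hzhmax⟩ :=
    isCompact_Icc.exists_isMaxOn (Set.nonempty_Icc.mpr hS₀0) hhc.continuousOn
  set Cf := f zf with hCfdef
  set Ch := h zh with hChdef
  have hCf : ∀ z ∈ Set.Icc (0:ℝ) S₀, f z ≤ Cf := fun z hz => hzfmax hz
  have hCh : ∀ z ∈ Set.Icc (0:ℝ) S₀, h z ≤ Ch := fun z hz => hzhmax hz
  have hCf0 : 0 ≤ Cf := by
    have h5 := hCf 0 ⟨le_rfl, hS₀0⟩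
    rwa [hf0] at h5
  have hCh0 : 0 ≤ Ch := (hhpos zh).le
  have keyf : ∀ m : ℝ, 0 ≤ m → f m ≤ Cf + δ * m := by
    intro m hm0
    rcases le_total m S₀ with hc | hc
    · have h5 := hCf m ⟨hm0, hc⟩
      have h6 := mul_nonneg hδ.le hm0
      linarith
    · have hm1 : (1:ℝ) ≤ m := le_trans hS₀1 hc
      have hmpos : (0:ℝ) < m := by linarith
      have hS1m : S₁ ≤ m := le_trans (le_trans (le_max_left S₁ S₂) (le_max_left _ 1)) hc
      have h2 := hS₁ m hS1m
      have h3 : f m / m ≤ δ := le_of_lt (lt_of_le_of_lt (le_abs_self _) h2)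
      have h4 : f m ≤ δ * m := by rwa [div_le_iff₀ hmpos] at h3
      linarith
  have keyh : ∀ m : ℝ, 0 ≤ m → h m ≤ Ch + 1 := by
    intro m hm0
    rcases le_total m S₀ with hc | hc
    · have h5 := hCh m ⟨hm0, hc⟩
      linarith
    · have hS2m : S₂ ≤ m := le_trans (le_trans (le_max_right S₁ S₂) (le_max_left _ 1)) hc
      have h2 := hS₂ m hS2m
      have h3 : h m ≤ 1 := le_of_lt (lt_of_le_of_lt (le_abs_self _) h2)
      linarith
  set K₀ := π * Cf + π * Ch + π + 2 * (π * h 0) with hK₀def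
  have hT : ∀ᶠ i in atTop,
      ri i ≥ max (2 * K₀ / ε) (max (π * h 0 / R) (2 * π * h 0 / ε)) :=
    hri.eventually_ge_atTop _
  filter_upwards [hT] with i hTi
  have hripos := hri_pos i
  have hE1 : 2 * K₀ / ε ≤ ri i := le_trans (le_max_left _ _) hTi
  have hE2 : π * h 0 / R ≤ ri i := le_trans (le_trans (le_max_left _ _) (le_max_right _ _)) hTi
  have hE3 : 2 * π * h 0 / ε ≤ ri i :=
    le_trans (le_trans (le_max_right _ _) (le_max_right _ _)) hTi
  have hE1' : 2 * K₀ ≤ ε * ri i := by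
    rw [div_le_iff₀ hε] at hE1; linarith
  have hE2' : π * h 0 ≤ ri i * R := by
    rw [div_le_iff₀ hR] at hE2; linarith
  have hE3' : 2 * π * h 0 ≤ ε * ri i := by
    rw [div_le_iff₀ hε] at hE3; linarith
  have Ebound : ∀ m : ℝ, 0 ≤ m → m ≤ ri i * R →
      π * f m + π * h m + 2 * (π * h 0) ≤ ε * ri i := by
    intro m hm0 hm1
    have hfm : f m ≤ Cf + δ * (ri i * R) := by
      have k1 := keyf m hm0
      have k2 : δ * m ≤ δ * (ri i * R) := mul_le_mul_of_nonneg_left hm1 hδ.le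
      linarith
    have t1 : π * f m ≤ π * Cf + π * δ * (ri i * R) := by nlinarith [hfm, hπ]
    have t2 : π * h m ≤ π * Ch + π := by nlinarith [keyh m hm0, hπ]
    have e1 : π * δ * R = ε * R / (2 * (R + 1)) := by
      rw [hδdef]; field_simp
    have e2 : ε * R / (2 * (R + 1)) ≤ ε / 2 := by
      rw [div_le_div_iff₀ (by positivity) two_pos]
      nlinarith [hε, hR]
    have t3 : π * δ * (ri i * R) ≤ ε / 2 * ri i := by
      have e3 : π * δ * (ri i * R) = (π * δ * R) * ri i := by ring
      rw [e3, e1]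
      exact mul_le_mul_of_nonneg_right e2 hripos.le
    have t4 : K₀ ≤ ε / 2 * ri i := by linarith
    linarith [t1, t2, t3, t4, hK₀def.le, hK₀def.ge]
  refine ⟨fun a => dist p a / ri i, ?_, ?_, ?_, ?_⟩
  · simp only [dist_self, zero_div]
  · intro a ha
    dsimp only
    constructor
    · have h1 : 0 ≤ dist p a / ri i := div_nonneg dist_nonneg hripos.le
      linarith
    · have h1 : dist p a / ri i ≤ R := by
        rw [div_le_iff₀ hripos]; linarith
      linarith
  · intro a b ha hb
    obtain ⟨⟨sa, xa, ya⟩, hqa, rfl⟩ := hsurj a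
    obtain ⟨⟨sb, xb, yb⟩, hqb, rfl⟩ := hsurj b
    dsimp only
    have hDa := D1 sa xa ya hqa.1 hqa.2
    have hDb := D1 sb xb yb hqb.1 hqb.2
    have htri : |dist p (Ψ (sa, xa, ya)) - dist p (Ψ (sb, xb, yb))|
        ≤ dist (Ψ (sa, xa, ya)) (Ψ (sb, xb, yb)) := by
      rw [dist_comm p (Ψ (sa, xa, ya)), dist_comm p (Ψ (sb, xb, yb))]
      exact abs_dist_sub_le _ _ _
    have hub : dist (Ψ (sa, xa, ya)) (Ψ (sb, xb, yb))
        ≤ |dist p (Ψ (sa, xa, ya)) - dist p (Ψ (sb, xb, yb))| + ε * ri i := by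
      rcases le_total sa sb with hc | hc
      · have h5 := claim sa sb xa xb ya yb hqa.1 hc hqa.2 hqb.2
        have h6 := Ebound sa hqa.1 (le_trans hDa.1 ha)
        have h8 := neg_abs_le (dist p (Ψ (sa, xa, ya)) - dist p (Ψ (sb, xb, yb)))
        linarith [hDa.2, hDb.1]
      · have h5 := claim sb sa xb xa yb ya hqb.1 hc hqb.2 hqa.2
        rw [dist_comm (Ψ (sb, xb, yb)) (Ψ (sa, xa, ya))] at h5
        have h6 := Ebound sb hqb.1 (le_trans hDb.1 hb)
        have h8 := le_abs_self (dist p (Ψ (sa, xa, ya)) - dist p (Ψ (sb, xb, yb)))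
        linarith [hDb.2, hDa.1]
    have hloweq : |dist p (Ψ (sa, xa, ya)) / ri i - dist p (Ψ (sb, xb, yb)) / ri i|
        = |dist p (Ψ (sa, xa, ya)) - dist p (Ψ (sb, xb, yb))| / ri i := by
      rw [div_sub_div_same, abs_div, abs_of_pos hripos]
    rw [hloweq, abs_le]
    constructor
    · have h10 : |dist p (Ψ (sa, xa, ya)) - dist p (Ψ (sb, xb, yb))| / ri i
          ≤ dist (Ψ (sa, xa, ya)) (Ψ (sb, xb, yb)) / ri i := by gcongr
      linarith
    · have h11 : dist (Ψ (sa, xa, ya)) (Ψ (sb, xb, yb)) / ri i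
          ≤ (|dist p (Ψ (sa, xa, ya)) - dist p (Ψ (sb, xb, yb))| + ε * ri i) / ri i := by
        gcongr
      have h12 : (|dist p (Ψ (sa, xa, ya)) - dist p (Ψ (sb, xb, yb))| + ε * ri i) / ri i
          = |dist p (Ψ (sa, xa, ya)) - dist p (Ψ (sb, xb, yb))| / ri i + ε := by
        field_simp
      linarith
  · intro s hs
    set c := π * h 0 / ri i with hcdef
    have hc0 : 0 ≤ c := div_nonneg (mul_nonneg hπ.le (hhpos 0).le) hripos.le
    have hcri : c * ri i = π * h 0 := by
      rw [hcdef]; field_simp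
    set s' := max (s - c) 0 with hs'def
    have hs'0 : 0 ≤ s' := le_max_right _ _
    have hs'ri : 0 ≤ s' * ri i := mul_nonneg hs'0 hripos.le
    have hD := D1 (s' * ri i) x₀ y₀ hs'ri hx₀
    refine ⟨Ψ (s' * ri i, x₀, y₀), ?_, ?_⟩
    · rcases le_total (s - c) 0 with hcase | hcase
      · have hseq : s' = 0 := max_eq_right hcase
        have e0 : s' * ri i = 0 := by rw [hseq, zero_mul]
        linarith [hD.2, hE2', e0]
      · have hseq : s' = s - c := max_eq_left hcase
        have e4 : s' * ri i = s * ri i - c * ri i := by rw [hseq]; ring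
        have e5 : s * ri i ≤ R * ri i := mul_le_mul_of_nonneg_right hs.2 hripos.le
        nlinarith [hD.2, e4, e5, hcri]
    · dsimp only
      have h1 := hD.1
      have h2 := hD.2
      have h3 : s' ≤ dist p (Ψ (s' * ri i, x₀, y₀)) / ri i := by
        rw [le_div_iff₀ hripos]; linarith
      have h4 : dist p (Ψ (s' * ri i, x₀, y₀)) / ri i ≤ s' + c := by
        rw [div_le_iff₀ hripos]
        have : (s' + c) * ri i = s' * ri i + c * ri i := by ring
        rw [this, hcri]; linarith
      have h5 : |s' - s| ≤ c := by
        rcases le_total (s - c) 0 with hcase | hcase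
        · have hseq : s' = 0 := max_eq_right hcase
          rw [hseq, abs_le]
          constructor <;> linarith [hs.1]
        · have hseq : s' = s - c := max_eq_left hcase
          rw [hseq, abs_le]
          constructor <;> linarith
      have hεc : 2 * c ≤ ε := by
        nlinarith [hcri, hE3', hripos]
      have h6 := abs_le.mp h5
      rw [abs_le]
      constructor <;> [linarith [h6.1]; linarith [h6.2]]
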